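/- arXiv:1905.06797 — 2 statements merged into one kernel-verified Lean document; each statement's English description precedes it below -/
import Mathlib

section
/- Let f : ℝⁿ → ℝ be weakly lower C¹ at x̄: for every ε > 0 there exists δ > 0 such that for all x, z ∈ B(x̄,δ), f(x) - f(z) ≥ -f°(z, z - x) - ε‖x - z‖. Fix c > 0, and for z, x define g'(z,x) ∈ ∂f(z) achieving g'ᵀ(x - z) = -f°(z, z - x), with the corresponding downshifted tangent m(y) = f(z) + g'ᵀ(y - z) - s, s = max{f(z) + g'ᵀ(x - z) - f(x) + c‖z - x‖², 0}. Then for all sequences zⱼ, xⱼ → x̄ there exist εⱼ → 0⁺ with f(zⱼ) ≤ mⱼ(zⱼ) + εⱼ‖zⱼ - xⱼ‖. -/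
/-!
At `y = z` the downshifted tangent is `f z - s`, so the claim is `s ≤ ε ‖z - x‖` and we may take
`ε = s / ‖z - x‖`. Weak lower C¹ regularity, combined with `g'ᵀ(x - z) = -f°(z, z - x)`, makes the
linearization error `f z + g'ᵀ(x - z) - f x` at most `o(‖z - x‖)`, and `c ‖z - x‖² = o(‖z - x‖)`
because `z - x → 0`; hence `s = o(‖z - x‖)`.
-/

open Filter Topology Metric

noncomputable def clarkeD {n : ℕ} (f : EuclideanSpace ℝ (Fin n) → ℝ)
    (x d : EuclideanSpace ℝ (Fin n)) : ℝ :=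
  Filter.limsup (fun p : EuclideanSpace ℝ (Fin n) × ℝ => (f (p.1 + p.2 • d) - f p.1) / p.2)
    ((𝓝 x) ×ˢ (𝓝[>] (0 : ℝ)))

def clarkeSubdiff {n : ℕ} (f : EuclideanSpace ℝ (Fin n) → ℝ) (x : EuclideanSpace ℝ (Fin n)) :
    Set (EuclideanSpace ℝ (Fin n)) :=
  {g | ∀ d, (inner ℝ g d : ℝ) ≤ clarkeD f x d}

noncomputable def downshift {n : ℕ} (f : EuclideanSpace ℝ (Fin n) → ℝ) (c : ℝ)
    (z x g : EuclideanSpace ℝ (Fin n)) : ℝ :=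
  max (f z + (inner ℝ g (x - z) : ℝ) - f x + c * ‖z - x‖^2) 0

noncomputable def downshiftedTangent {n : ℕ} (f : EuclideanSpace ℝ (Fin n) → ℝ) (c : ℝ)
    (z x g y : EuclideanSpace ℝ (Fin n)) : ℝ :=
  f z + (inner ℝ g (y - z) : ℝ) - downshift f c z x g

open Asymptotics

theorem exists_nonneg_tendsto_zero_le_mul_of_isLittleO {α : Type*} {l : Filter α} {u v : α → ℝ}
    (hu : ∀ j, 0 ≤ u j) (hv : ∀ j, 0 ≤ v j) (hzero : ∀ j, v j = 0 → u j = 0) (huv : u =o[l] v) :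
    ∃ ε : α → ℝ, (∀ j, 0 ≤ ε j) ∧ Tendsto ε l (𝓝 0) ∧ ∀ j, u j ≤ ε j * v j := by
  refine ⟨fun j => u j / v j, fun j => div_nonneg (hu j) (hv j), huv.tendsto_div_nhds_zero,
    fun j => ?_⟩
  by_cases hvj : v j = 0
  · simp [hvj, hzero j hvj]
  · rw [div_mul_cancel₀ _ hvj]

section Downshift

variable {n : ℕ} {f : EuclideanSpace ℝ (Fin n) → ℝ} {c : ℝ}

theorem downshift_nonneg (z x g : EuclideanSpace ℝ (Fin n)) : 0 ≤ downshift f c z x g :=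
  le_max_right _ _

theorem downshift_self (z g : EuclideanSpace ℝ (Fin n)) : downshift f c z z g = 0 := by
  simp [downshift]

theorem downshiftedTangent_self (z x g : EuclideanSpace ℝ (Fin n)) :
    downshiftedTangent f c z x g z = f z - downshift f c z x g := by
  simp [downshiftedTangent]

variable {xbar : EuclideanSpace ℝ (Fin n)}
  {g' : EuclideanSpace ℝ (Fin n) → EuclideanSpace ℝ (Fin n) → EuclideanSpace ℝ (Fin n)}
  {α : Type*} {l : Filter α} {z x : α → EuclideanSpace ℝ (Fin n)}

theorem eventually_linearization_error_le
    (hwlc1 : ∀ ε > (0:ℝ), ∃ δ > (0:ℝ), ∀ x ∈ ball xbar δ, ∀ z ∈ ball xbar δ,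
      f x - f z ≥ -(clarkeD f z (z - x)) - ε * ‖x - z‖)
    (hg'eq : ∀ z x, (inner ℝ (g' z x) (x - z) : ℝ) = -(clarkeD f z (z - x)))
    (hz : Tendsto z l (𝓝 xbar)) (hx : Tendsto x l (𝓝 xbar)) {ε : ℝ} (hε : 0 < ε) :
    ∀ᶠ j in l, f (z j) + inner ℝ (g' (z j) (x j)) (x j - z j) - f (x j) ≤ ε * ‖z j - x j‖ := by
  obtain ⟨δ, hδ, hwl⟩ := hwlc1 ε hε
  filter_upwards [hz (ball_mem_nhds _ hδ), hx (ball_mem_nhds _ hδ)] with j hzj hxj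
  have := hwl (x j) hxj (z j) hzj
  rw [hg'eq, norm_sub_rev]
  linarith

theorem isLittleO_downshift
    (hwlc1 : ∀ ε > (0:ℝ), ∃ δ > (0:ℝ), ∀ x ∈ ball xbar δ, ∀ z ∈ ball xbar δ,
      f x - f z ≥ -(clarkeD f z (z - x)) - ε * ‖x - z‖)
    (hg'eq : ∀ z x, (inner ℝ (g' z x) (x - z) : ℝ) = -(clarkeD f z (z - x)))
    (hz : Tendsto z l (𝓝 xbar)) (hx : Tendsto x l (𝓝 xbar)) :
    (fun j => downshift f c (z j) (x j) (g' (z j) (x j))) =o[l] fun j => ‖z j - x j‖ := by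
  have hdist : Tendsto (fun j => ‖z j - x j‖) l (𝓝 0) := by simpa using (hz.sub hx).norm
  rw [isLittleO_iff]
  intro ε hε
  have hquad : ∀ᶠ j in l, c * ‖z j - x j‖ ≤ ε / 2 := by
    refine Tendsto.eventually_le_const (half_pos hε) ?_
    simpa using hdist.const_mul c
  filter_upwards [eventually_linearization_error_le hwlc1 hg'eq hz hx (half_pos hε), hquad]
    with j hlin hcj
  have hnorm : 0 ≤ ‖z j - x j‖ := norm_nonneg _
  rw [Real.norm_of_nonneg (downshift_nonneg _ _ _), norm_norm]
  have : c * ‖z j - x j‖ ^ 2 ≤ ε / 2 * ‖z j - x j‖ := by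
    rw [sq, ← mul_assoc]
    exact mul_le_mul_of_nonneg_right hcj hnorm
  exact max_le (by linarith) (by positivity)

end Downshift

theorem stmt8_general {n : ℕ} (f : EuclideanSpace ℝ (Fin n) → ℝ)
    (xbar : EuclideanSpace ℝ (Fin n)) (c : ℝ)
    (hwlc1 : ∀ ε > (0:ℝ), ∃ δ > (0:ℝ), ∀ x ∈ Metric.ball xbar δ, ∀ z ∈ Metric.ball xbar δ,
      f x - f z ≥ -(clarkeD f z (z - x)) - ε * ‖x - z‖)
    (g' : EuclideanSpace ℝ (Fin n) → EuclideanSpace ℝ (Fin n) → EuclideanSpace ℝ (Fin n))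
    (hg'eq : ∀ z x, (inner ℝ (g' z x) (x - z) : ℝ) = -(clarkeD f z (z - x))) :
    ∀ (z x : ℕ → EuclideanSpace ℝ (Fin n)),
      Filter.Tendsto z Filter.atTop (𝓝 xbar) → Filter.Tendsto x Filter.atTop (𝓝 xbar) →
      ∃ ε : ℕ → ℝ, (∀ j, 0 ≤ ε j) ∧ Filter.Tendsto ε Filter.atTop (𝓝 0) ∧
        ∀ j, f (z j) ≤
          downshiftedTangent f c (z j) (x j) (g' (z j) (x j)) (z j) + ε j * ‖z j - x j‖ := by
  intro z x hz hx
  obtain ⟨ε, hε0, hε, hle⟩ := exists_nonneg_tendsto_zero_le_mul_of_isLittleO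
    (fun j => downshift_nonneg (f := f) (c := c) (z j) (x j) (g' (z j) (x j)))
    (fun j => norm_nonneg (z j - x j))
    (fun j hj => by rw [norm_sub_eq_zero_iff.1 hj, downshift_self])
    (isLittleO_downshift hwlc1 hg'eq hz hx)
  refine ⟨ε, hε0, hε, fun j => ?_⟩
  rw [downshiftedTangent_self]
  linarith [hle j]

theorem stmt8 {n : ℕ} (f : EuclideanSpace ℝ (Fin n) → ℝ) (hf : LocallyLipschitz f)
    (xbar : EuclideanSpace ℝ (Fin n)) (c : ℝ) (hc : 0 < c)
    (hwlc1 : ∀ ε > (0:ℝ), ∃ δ > (0:ℝ), ∀ x ∈ Metric.ball xbar δ, ∀ z ∈ Metric.ball xbar δ,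
      f x - f z ≥ -(clarkeD f z (z - x)) - ε * ‖x - z‖)
    (g' : EuclideanSpace ℝ (Fin n) → EuclideanSpace ℝ (Fin n) → EuclideanSpace ℝ (Fin n))
    (hg'mem : ∀ z x, g' z x ∈ clarkeSubdiff f z)
    (hg'eq : ∀ z x, (inner ℝ (g' z x) (x - z) : ℝ) = -(clarkeD f z (z - x))) :
    ∀ (z x : ℕ → EuclideanSpace ℝ (Fin n)),
      Filter.Tendsto z Filter.atTop (𝓝 xbar) → Filter.Tendsto x Filter.atTop (𝓝 xbar) →
      ∃ ε : ℕ → ℝ, (∀ j, 0 ≤ ε j) ∧ Filter.Tendsto ε Filter.atTop (𝓝 0) ∧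
        ∀ j, f (z j) ≤
          downshiftedTangent f c (z j) (x j) (g' (z j) (x j)) (z j) + ε j * ‖z j - x j‖ :=
  stmt8_general f xbar c hwlc1 g' hg'eq
end

section
/- Let f = g - h with g, h : ℝⁿ → ℝ convex and suppose ∂f(x) = ∂g(x) - ∂h(x) (Clarke subdifferential equals the difference of convex subdifferentials) for all x. Then φ(y,x) = g(y) + [-h(x) + (-h)°(x, y - x)] is a strict model of f, where (-h)°(x,d) = max{-qᵀd : q ∈ ∂h(x)} is the Clarke directional derivative of -h. -/
/-!
For convex `h` the Clarke derivative of `-h` at `x` in direction `d` is the one-sided directional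
derivative `h'(x; -d)`: by monotonicity of difference quotients the Clarke quotients at nearby
points are dominated by a fixed-step quotient at `x`, while along `y = x - t • d` they equal
`h`'s own quotients. Hence `φ(y, x) = g y - h x + h'(x; x - y)`.
Everything then follows from `h'(x; ·)` being sublinear. It is convex, so `φ(·, x)` is convex;
`h'(x; x - y) ≥ h x - h y`, so `f ≤ φ(·, x)` and (M̂₂) holds with `ε = 0`; `h'` is an infimum of
continuous quotients, hence upper semicontinuous in `(x, v)`, which gives (M₃). A subgradient `p`
of `φ(·, x)` at `x` satisfies `⟪p, d⟫ ≤ g'(x; d) + h'(x; -d)`, and Hahn–Banach yields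
`a ∈ ∂g(x)`, `b ∈ ∂h(x)` attaining these two values, so `⟪p, d⟫ ≤ ⟪a - b, d⟫ ≤ f°(x; d)` because
`a - b ∈ ∂f(x)`.
-/

open Filter Topology Metric

def convexSubdiff {n : ℕ} (φ : EuclideanSpace ℝ (Fin n) → ℝ) (x : EuclideanSpace ℝ (Fin n)) :
    Set (EuclideanSpace ℝ (Fin n)) :=
  {g | ∀ y, φ x + (inner ℝ g (y - x) : ℝ) ≤ φ y}

open Set
open scoped RealInnerProductSpace

lemma tendsto_mul_left_nhdsGT_zero {c : ℝ} (hc : 0 < c) :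
    Tendsto (c * ·) (𝓝[>] 0) (𝓝[>] 0) := by
  simpa only [comap_mulLeft_nhdsGT_zero hc] using
    tendsto_comap (f := (c * ·)) (x := 𝓝[>] (0 : ℝ))

section DirDeriv

variable {E : Type*} [AddCommGroup E] [Module ℝ E] {F : E → ℝ}

noncomputable def dirSlope (F : E → ℝ) (x v : E) (t : ℝ) : ℝ := (F (x + t • v) - F x) / t

-- For convex `F` the slopes decrease as `t ↓ 0` (`ConvexOn.tendsto_dirSlope`), so this infimum is
-- the one-sided directional derivative `F'(x; v)`.
noncomputable def dirDeriv (F : E → ℝ) (x v : E) : ℝ :=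
  ⨅ t : Ioi (0 : ℝ), dirSlope F x v t

lemma dirDeriv_zero (F : E → ℝ) (x : E) : dirDeriv F x 0 = 0 := by
  simp [dirDeriv, dirSlope]

namespace ConvexOn

variable (hF : ConvexOn ℝ univ F) (x : E)
include hF

lemma comp_line (v : E) : ConvexOn ℝ univ fun t : ℝ => F (x + t • v) := by
  have hline : (fun t : ℝ => F (x + t • v)) = F ∘ AffineMap.lineMap x (x + v) := by
    funext t; simp [AffineMap.lineMap_apply, add_comm]
  simpa [hline] using hF.comp_affineMap (AffineMap.lineMap x (x + v))

lemma slope_line_mono (v : E) {s t : ℝ} (hs : s ≠ 0) (ht : t ≠ 0) (hst : s ≤ t) :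
    (F (x + s • v) - F x) / s ≤ (F (x + t • v) - F x) / t := by
  simpa using (hF.comp_line x v).secant_mono (mem_univ 0) (mem_univ s) (mem_univ t) hs ht hst

lemma dirSlope_mono (v : E) {s t : ℝ} (hs : 0 < s) (hst : s ≤ t) :
    dirSlope F x v s ≤ dirSlope F x v t :=
  hF.slope_line_mono x v hs.ne' (hs.trans_le hst).ne' hst

lemma neg_dirSlope_neg_le (v : E) {s t : ℝ} (hs : 0 < s) (ht : 0 < t) :
    -dirSlope F x (-v) t ≤ dirSlope F x v s := by
  have := hF.slope_line_mono x v (neg_ne_zero.2 ht.ne') hs.ne' (by linarith)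
  rwa [neg_smul, ← smul_neg, div_neg] at this

lemma bddBelow_dirSlope (v : E) : BddBelow (range fun t : Ioi (0 : ℝ) => dirSlope F x v t) :=
  ⟨-dirSlope F x (-v) 1, by
    rintro _ ⟨⟨s, hs⟩, rfl⟩
    exact hF.neg_dirSlope_neg_le x v hs one_pos⟩

lemma dirDeriv_le_dirSlope (v : E) {t : ℝ} (ht : 0 < t) : dirDeriv F x v ≤ dirSlope F x v t :=
  ciInf_le (hF.bddBelow_dirSlope x v) ⟨t, ht⟩

lemma tendsto_dirSlope (v : E) :
    Tendsto (dirSlope F x v) (𝓝[>] 0) (𝓝 (dirDeriv F x v)) := by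
  rw [dirDeriv, ← sInf_image']
  refine MonotoneOn.tendsto_nhdsGT (fun s hs t _ hst => hF.dirSlope_mono x v hs hst) ?_
  rw [image_eq_range]
  exact hF.bddBelow_dirSlope x v

lemma dirDeriv_smul (v : E) {c : ℝ} (hc : 0 ≤ c) :
    dirDeriv F x (c • v) = c * dirDeriv F x v := by
  rcases hc.eq_or_lt with rfl | hc
  · simp [dirDeriv_zero]
  have hscale : ∀ t ≠ 0, dirSlope F x (c • v) t = c * dirSlope F x v (c * t) := by
    intro t ht
    simp only [dirSlope, smul_smul, mul_comm t c]
    field_simp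
  refine tendsto_nhds_unique (hF.tendsto_dirSlope x (c • v)) ?_
  have hlim := ((hF.tendsto_dirSlope x v).comp (tendsto_mul_left_nhdsGT_zero hc)).const_mul c
  refine hlim.congr' ?_
  filter_upwards [self_mem_nhdsWithin] with t ht
  exact (hscale t ht.ne').symm

lemma dirDeriv_add_le (v w : E) : dirDeriv F x (v + w) ≤ dirDeriv F x v + dirDeriv F x w := by
  have hmid : ∀ t > 0,
      dirSlope F x (v + w) t ≤ dirSlope F x v (2 * t) + dirSlope F x w (2 * t) := by
    intro t ht
    have hconv := hF.2 (mem_univ (x + (2 * t) • v)) (mem_univ (x + (2 * t) • w))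
      (by norm_num : (0 : ℝ) ≤ 1 / 2) (by norm_num : (0 : ℝ) ≤ 1 / 2) (by norm_num)
    rw [show (1 / 2 : ℝ) • (x + (2 * t) • v) + (1 / 2 : ℝ) • (x + (2 * t) • w) = x + t • (v + w)
      by module, smul_eq_mul, smul_eq_mul] at hconv
    simp only [dirSlope]
    rw [← add_div, div_le_div_iff₀ ht (by positivity)]
    nlinarith
  have h2 := tendsto_mul_left_nhdsGT_zero (c := 2) two_pos
  exact le_of_tendsto_of_tendsto (hF.tendsto_dirSlope x (v + w))
    (((hF.tendsto_dirSlope x v).comp h2).add ((hF.tendsto_dirSlope x w).comp h2))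
    (eventually_nhdsWithin_of_forall hmid)

lemma mul_dirDeriv_le_dirDeriv_smul (v : E) (c : ℝ) :
    c * dirDeriv F x v ≤ dirDeriv F x (c • v) := by
  rcases le_or_gt 0 c with hc | hc
  · exact (hF.dirDeriv_smul x v hc).ge
  · have hsub := hF.dirDeriv_add_le x (c • v) ((-c) • v)
    rw [← add_smul, add_neg_cancel, zero_smul, dirDeriv_zero,
      hF.dirDeriv_smul x v (neg_nonneg.2 hc.le)] at hsub
    linarith

lemma convexOn_dirDeriv : ConvexOn ℝ univ (dirDeriv F x) :=
  ⟨convex_univ, fun v _ w _ a b ha hb _ => (hF.dirDeriv_add_le x _ _).trans_eq <| by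
    rw [hF.dirDeriv_smul x v ha, hF.dirDeriv_smul x w hb, smul_eq_mul, smul_eq_mul]⟩

lemma exists_linearMap_le_dirDeriv (d : E) :
    ∃ ℓ : E →ₗ[ℝ] ℝ, (∀ v, ℓ v ≤ dirDeriv F x v) ∧ ℓ d = dirDeriv F x d := by
  have hker : ∀ c : ℝ, c • d = 0 → c • dirDeriv F x d = 0 := by
    intro c hc
    rcases smul_eq_zero.1 hc with rfl | rfl
    · exact zero_smul _ _
    · rw [dirDeriv_zero, smul_zero]
  obtain ⟨ℓ, hℓ, hle⟩ := exists_extension_of_le_sublinear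
    (LinearPMap.mkSpanSingleton' d (dirDeriv F x d) hker) (dirDeriv F x)
    (fun c hc v => hF.dirDeriv_smul x v hc.le) (hF.dirDeriv_add_le x) (by
      rintro ⟨_, hz⟩
      obtain ⟨c, rfl⟩ := Submodule.mem_span_singleton.1 hz
      rw [LinearPMap.mkSpanSingleton'_apply]
      exact hF.mul_dirDeriv_le_dirDeriv_smul x d c)
  refine ⟨ℓ, hle, ?_⟩
  exact (hℓ ⟨d, Submodule.mem_span_singleton_self d⟩).trans
    (LinearPMap.mkSpanSingleton'_apply_self _ _ _ _)

lemma dirDeriv_le_sub (v : E) : dirDeriv F x v ≤ F (x + v) - F x := by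
  simpa [dirSlope] using hF.dirDeriv_le_dirSlope x v one_pos

lemma sub_le_dirDeriv (y : E) : F x - F y ≤ dirDeriv F x (x - y) := by
  have hle : -dirSlope F x (-(x - y)) 1 ≤ dirDeriv F x (x - y) :=
    le_ciInf fun s => hF.neg_dirSlope_neg_le x _ s.2 one_pos
  simpa [dirSlope] using hle

end ConvexOn

end DirDeriv

section Model

variable {E : Type*} [AddCommGroup E] [Module ℝ E] {g h : E → ℝ}

noncomputable def dcModel (g h : E → ℝ) (y x : E) : ℝ := g y - h x + dirDeriv h x (x - y)

lemma dcModel_self (g h : E → ℝ) (x : E) : dcModel g h x x = g x - h x := by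
  simp [dcModel, dirDeriv_zero]

lemma sub_le_dcModel (hh : ConvexOn ℝ univ h) (y x : E) : g y - h y ≤ dcModel g h y x := by
  have := hh.sub_le_dirDeriv x y
  unfold dcModel
  linarith

lemma convexOn_dcModel (hg : ConvexOn ℝ univ g) (hh : ConvexOn ℝ univ h) (x : E) :
    ConvexOn ℝ univ fun y => dcModel g h y x := by
  have hD : ConvexOn ℝ univ fun y => dirDeriv h x (x - y) :=
    (hh.convexOn_dirDeriv x).comp_affineMap (AffineMap.const ℝ E x - AffineMap.id ℝ E)
  exact (hg.sub (concaveOn_const _ convex_univ)).add hD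

end Model

section Semicontinuity

variable {E : Type*} [AddCommGroup E] [Module ℝ E] [TopologicalSpace E] [IsTopologicalAddGroup E]
  [ContinuousSMul ℝ E] {F g h : E → ℝ}

lemma continuous_dirSlope (hc : Continuous F) (t : ℝ) :
    Continuous fun p : E × E => dirSlope F p.1 p.2 t := by
  unfold dirSlope
  fun_prop

lemma ConvexOn.upperSemicontinuous_dirDeriv (hF : ConvexOn ℝ univ F) (hc : Continuous F) :
    UpperSemicontinuous fun p : E × E => dirDeriv F p.1 p.2 :=
  upperSemicontinuous_ciInf (fun p => hF.bddBelow_dirSlope p.1 p.2)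
    fun t => (continuous_dirSlope hc t).upperSemicontinuous

lemma limsup_dcModel_le (hgc : Continuous g) (hh : ConvexOn ℝ univ h) (hhc : Continuous h)
    {ι : Type*} {l : Filter ι} [l.NeBot] {x y : E} {xk yk : ι → E}
    (hx : Tendsto xk l (𝓝 x)) (hy : Tendsto yk l (𝓝 y)) :
    limsup (fun k => dcModel g h (yk k) (xk k)) l ≤ dcModel g h y x := by
  have hD : UpperSemicontinuous fun p : E × E => dirDeriv h p.2 (p.2 - p.1) :=
    UpperSemicontinuous.comp (f := fun p : E × E => dirDeriv h p.1 p.2)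
      (g := fun p : E × E => (p.2, p.2 - p.1)) (hh.upperSemicontinuous_dirDeriv hhc) (by fun_prop)
  have husc : UpperSemicontinuous fun p : E × E => dcModel g h p.1 p.2 :=
    (by fun_prop : Continuous fun p : E × E => g p.1 - h p.2).upperSemicontinuous.add hD
  have hlower : Tendsto (fun k => g (yk k) - h (yk k)) l (𝓝 (g y - h y)) :=
    ((hgc.sub hhc).tendsto y).comp hy
  have hcob : IsCoboundedUnder (· ≤ ·) l fun k => dcModel g h (yk k) (xk k) :=
    isCoboundedUnder_le_of_eventually_le l <|
      (hlower.eventually (eventually_ge_nhds (sub_one_lt _))).mono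
        fun k hk => hk.trans (sub_le_dcModel hh _ _)
  refine le_of_forall_gt_imp_ge_of_dense fun c hc => limsup_le_of_le hcob ?_
  exact ((hy.prodMk_nhds hx).eventually (husc (y, x) c hc)).mono fun _ => le_of_lt

end Semicontinuity

section InnerProduct

variable {E : Type*} [NormedAddCommGroup E] [InnerProductSpace ℝ E] {F g h : E → ℝ}

lemma ConvexOn.exists_subgradient_inner_eq_dirDeriv [FiniteDimensional ℝ E]
    (hF : ConvexOn ℝ univ F) (x d : E) :
    ∃ a : E, (∀ y, F x + ⟪a, y - x⟫ ≤ F y) ∧ ⟪a, d⟫ = dirDeriv F x d := by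
  obtain ⟨ℓ, hle, hd⟩ := hF.exists_linearMap_le_dirDeriv x d
  set a := (InnerProductSpace.toDual ℝ E).symm (LinearMap.toContinuousLinearMap ℓ)
  have ha : ∀ v, ⟪a, v⟫ = ℓ v := fun v => InnerProductSpace.toDual_symm_apply
  refine ⟨a, fun y => ?_, (ha d).trans hd⟩
  have hy := (ha (y - x)).trans_le ((hle _).trans (hF.dirDeriv_le_sub x (y - x)))
  rw [add_sub_cancel] at hy
  linarith

lemma inner_le_dirDeriv_add_of_subgradient_dcModel (hh : ConvexOn ℝ univ h) {x p : E}
    (hp : ∀ y, dcModel g h x x + ⟪p, y - x⟫ ≤ dcModel g h y x) (d : E) :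
    ⟪p, d⟫ ≤ dirDeriv g x d + dirDeriv h x (-d) := by
  suffices ⟪p, d⟫ - dirDeriv h x (-d) ≤ dirDeriv g x d by linarith
  refine le_ciInf fun ⟨t, ht⟩ => ?_
  have hpt := hp (x + t • d)
  rw [dcModel_self, dcModel, add_sub_cancel_left, sub_add_cancel_left, ← smul_neg,
    hh.dirDeriv_smul x _ ht.le, inner_smul_right] at hpt
  rw [dirSlope, le_div_iff₀ ht]
  linarith

end InnerProduct

section Clarke

variable {n : ℕ}

lemma ConvexOn.clarkeD_neg_eq_dirDeriv {h : EuclideanSpace ℝ (Fin n) → ℝ}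
    (hh : ConvexOn ℝ univ h) (hc : Continuous h) (x d : EuclideanSpace ℝ (Fin n)) :
    clarkeD (fun u => -h u) x d = dirDeriv h x (-d) := by
  set L := 𝓝 x ×ˢ 𝓝[>] (0 : ℝ)
  -- The Clarke quotient of `-h` at `(y, t)` is a forward slope of `h` from `y + t • d`.
  set q := fun p : EuclideanSpace ℝ (Fin n) × ℝ => dirSlope h (p.1 + p.2 • d) (-d) p.2
  have hq : clarkeD (fun u => -h u) x d = limsup q L := by
    rw [clarkeD]
    congr 1
    funext p
    simp only [q, dirSlope, add_neg_cancel_right, smul_neg]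
    ring
  have hshift : Tendsto (fun p : EuclideanSpace ℝ (Fin n) × ℝ => (p.1 + p.2 • d, -d)) L
      (𝓝 (x, -d)) := by
    have hfst : Tendsto (fun p : EuclideanSpace ℝ (Fin n) × ℝ => p.1) L (𝓝 x) := tendsto_fst
    have hsnd : Tendsto (fun p : EuclideanSpace ℝ (Fin n) × ℝ => p.2) L (𝓝 0) :=
      tendsto_snd.mono_right nhdsWithin_le_nhds
    simpa using (hfst.add (hsnd.smul_const d)).prodMk_nhds tendsto_const_nhds
  have hU : ∀ s, Tendsto (fun p : EuclideanSpace ℝ (Fin n) × ℝ =>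
      dirSlope h (p.1 + p.2 • d) (-d) s) L (𝓝 (dirSlope h x (-d) s)) := fun s => by
    have hcomp := ((continuous_dirSlope hc s).tendsto (x, -d)).comp hshift
    exact hcomp
  -- Monotonicity of the slopes freezes the step at `s`; the frozen slope is continuous in `y`.
  have hqU : ∀ s > 0, q ≤ᶠ[L] fun p => dirSlope h (p.1 + p.2 • d) (-d) s := fun s hs =>
    (tendsto_snd.eventually (Ioc_mem_nhdsGT hs)).mono fun p hp =>
      hh.dirSlope_mono _ _ hp.1 hp.2
  have hfreq : ∃ᶠ p in L, dirDeriv h x (-d) ≤ q p := by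
    have hpath : Tendsto (fun t : ℝ => (x - t • d, t)) (𝓝[>] 0) L := by
      refine Tendsto.prodMk ?_ tendsto_id
      have := (tendsto_const_nhds (x := x)).sub ((tendsto_id (x := 𝓝 (0 : ℝ))).smul_const d)
      simpa using this.mono_left nhdsWithin_le_nhds
    refine hpath.frequently (Eventually.frequently ?_)
    filter_upwards [self_mem_nhdsWithin] with t ht
    simpa [q] using hh.dirDeriv_le_dirSlope x (-d) ht
  have hcob : IsCoboundedUnder (· ≤ ·) L q := IsCoboundedUnder.of_frequently_ge hfreq
  rw [hq]
  refine le_antisymm (le_ciInf fun ⟨s, hs⟩ => ?_) ?_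
  · calc limsup q L ≤ limsup (fun p => dirSlope h (p.1 + p.2 • d) (-d) s) L :=
          limsup_le_limsup (hqU s hs) hcob (hU s).isBoundedUnder_le
      _ = dirSlope h x (-d) s := (hU s).limsup_eq
  · exact le_limsup_of_frequently_le hfreq ((hU 1).isBoundedUnder_le.mono_le (hqU 1 one_pos))

lemma dirDeriv_add_dirDeriv_neg_le_clarkeD {f g h : EuclideanSpace ℝ (Fin n) → ℝ}
    (hg : ConvexOn ℝ univ g) (hh : ConvexOn ℝ univ h) {x : EuclideanSpace ℝ (Fin n)}
    (hDC : ∀ a ∈ convexSubdiff g x, ∀ b ∈ convexSubdiff h x, a - b ∈ clarkeSubdiff f x)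
    (d : EuclideanSpace ℝ (Fin n)) :
    dirDeriv g x d + dirDeriv h x (-d) ≤ clarkeD f x d := by
  obtain ⟨a, ha, had⟩ := hg.exists_subgradient_inner_eq_dirDeriv x d
  obtain ⟨b, hb, hbd⟩ := hh.exists_subgradient_inner_eq_dirDeriv x (-d)
  calc dirDeriv g x d + dirDeriv h x (-d) = ⟪a - b, d⟫ := by
        rw [← had, ← hbd, inner_sub_left, inner_neg_right, sub_eq_add_neg]
    _ ≤ clarkeD f x d := hDC a ha b hb d

end Clarke

theorem stmt9 {n : ℕ} (g h : EuclideanSpace ℝ (Fin n) → ℝ)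
    (hg : ConvexOn ℝ Set.univ g) (hh : ConvexOn ℝ Set.univ h)
    (f : EuclideanSpace ℝ (Fin n) → ℝ) (hfdef : ∀ x, f x = g x - h x)
    (hDC : ∀ x, clarkeSubdiff f x =
      {p | ∃ a ∈ convexSubdiff g x, ∃ b ∈ convexSubdiff h x, p = a - b})
    (φ : EuclideanSpace ℝ (Fin n) → EuclideanSpace ℝ (Fin n) → ℝ)
    (hφ : ∀ y x, φ y x = g y + (-(h x) + clarkeD (fun u => -(h u)) x (y - x))) :
    (∀ x, ConvexOn ℝ Set.univ (fun y => φ y x)) ∧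
    (∀ x, φ x x = f x) ∧
    (∀ x, convexSubdiff (fun y => φ y x) x ⊆ clarkeSubdiff f x) ∧
    (∀ (x : EuclideanSpace ℝ (Fin n)) (xk yk : ℕ → EuclideanSpace ℝ (Fin n)),
      Filter.Tendsto xk Filter.atTop (𝓝 x) → Filter.Tendsto yk Filter.atTop (𝓝 x) →
      ∃ ε : ℕ → ℝ, (∀ k, 0 ≤ ε k) ∧ Filter.Tendsto ε Filter.atTop (𝓝 0) ∧
        ∀ k, f (yk k) ≤ φ (yk k) (xk k) + ε k * ‖yk k - xk k‖) ∧
    (∀ (x y : EuclideanSpace ℝ (Fin n)) (xk yk : ℕ → EuclideanSpace ℝ (Fin n)),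
      Filter.Tendsto xk Filter.atTop (𝓝 x) → Filter.Tendsto yk Filter.atTop (𝓝 y) →
      Filter.limsup (fun k => φ (yk k) (xk k)) Filter.atTop ≤ φ y x) := by
  have hgc : Continuous g := continuousOn_univ.1 (hg.continuousOn isOpen_univ)
  have hhc : Continuous h := continuousOn_univ.1 (hh.continuousOn isOpen_univ)
  obtain rfl : φ = dcModel g h := by
    funext y x
    rw [hφ, hh.clarkeD_neg_eq_dirDeriv hhc, neg_sub, dcModel]
    ring
  refine ⟨convexOn_dcModel hg hh, fun x => (dcModel_self g h x).trans (hfdef x).symm,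
    fun x p hp d => ?_, fun x xk yk _ _ => ?_,
    fun x y xk yk hx hy => limsup_dcModel_le hgc hh hhc hx hy⟩
  · refine (inner_le_dirDeriv_add_of_subgradient_dcModel hh hp d).trans
      (dirDeriv_add_dirDeriv_neg_le_clarkeD hg hh (fun a ha b hb => ?_) d)
    rw [hDC x]
    exact ⟨a, ha, b, hb, rfl⟩
  · refine ⟨0, fun _ => le_rfl, tendsto_const_nhds, fun k => ?_⟩
    simpa [hfdef] using sub_le_dcModel hh (yk k) (xk k)
end
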